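/- arXiv:0803.2746 — 7 statements merged into one kernel-verified Lean document; each statement's English description precedes it below -/
import Mathlib

section
/- Let V be a vector space over a field F (of any cardinality), with dim V > k ≥ 1. Then V is a union of a family of codimension-k subspaces indexed by the projective space P(F^{k+1}): explicitly, fixing a basis containing v_0,...,v_k, for each projective point x one takes the span of the remaining basis vectors together with one suitable vector. -/
/-!
Since `dim V > k`, there is a surjection `f : V → F^{k+1}` (e.g. the first `k + 1` coordinates
in a basis). Preimages of lines of `F^{k+1}` under `f` have codimension `k`, and every vector of
`V` lies in one of them because every vector of `F^{k+1}` lies on some line.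
-/

open Module
open scoped LinearAlgebra.Projectivization

section

variable {K V W : Type*} [DivisionRing K] [AddCommGroup V] [Module K V] [AddCommGroup W]
  [Module K W]

theorem exists_linearMap_surjective_of_le_rank {n : ℕ} (h : (n : Cardinal) ≤ Module.rank K V) :
    ∃ f : V →ₗ[K] (Fin n → K), Function.Surjective f := by
  obtain ⟨i, hi⟩ := Module.le_rank_iff_exists_linearMap.mp h
  obtain ⟨g, hg⟩ := i.exists_leftInverse_of_injective (LinearMap.ker_eq_bot.mpr hi)
  exact ⟨g, Function.LeftInverse.surjective (LinearMap.congr_fun hg)⟩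

theorem Submodule.finrank_quotient_comap_of_surjective {R M N : Type*} [Ring R] [AddCommGroup M]
    [Module R M] [AddCommGroup N] [Module R N] {f : M →ₗ[R] N} (hf : Function.Surjective f)
    (p : Submodule R N) : finrank R (M ⧸ p.comap f) = finrank R (N ⧸ p) := by
  have hker : p.comap f = LinearMap.ker (p.mkQ ∘ₗ f) := by
    rw [LinearMap.ker_comp, Submodule.ker_mkQ]
  rw [hker]
  exact ((p.mkQ ∘ₗ f).quotKerEquivOfSurjective (p.mkQ_surjective.comp hf)).finrank_eq

theorem Projectivization.finrank_quotient_submodule [FiniteDimensional K W] (x : ℙ K W) :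
    finrank K (W ⧸ x.submodule) = finrank K W - 1 := by
  rw [← Submodule.finrank_quotient_add_finrank x.submodule, x.finrank_submodule, Nat.add_sub_cancel]

theorem Projectivization.iUnion_submodule_eq_univ [Nontrivial W] :
    ⋃ x : ℙ K W, (x.submodule : Set W) = Set.univ := by
  refine Set.eq_univ_of_forall fun w => Set.mem_iUnion.mpr ?_
  by_cases hw : w = 0
  · obtain ⟨v, hv⟩ := exists_ne (0 : W)
    exact ⟨mk K v hv, hw ▸ Submodule.zero_mem _⟩
  · exact ⟨mk K w hw, by rw [submodule_mk]; exact Submodule.mem_span_singleton_self w⟩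
end

theorem stmt_11_general (F V : Type*) [Field F] [AddCommGroup V] [Module F V]
    (k : ℕ) (hdim : (k : Cardinal) < Module.rank F V) :
    ∃ W : Projectivization F (Fin (k + 1) → F) → Submodule F V,
      (∀ x, Module.finrank F (V ⧸ W x) = k) ∧
      (⋃ x, (W x : Set V)) = Set.univ := by
  obtain ⟨f, hf⟩ := exists_linearMap_surjective_of_le_rank (n := k + 1)
    (by exact_mod_cast Cardinal.natCast_add_one_le_iff.mpr hdim)
  refine ⟨fun x => x.submodule.comap f, fun x => ?_, ?_⟩
  · rw [Submodule.finrank_quotient_comap_of_surjective hf, x.finrank_quotient_submodule]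
    simp
  · simp only [Submodule.comap_coe, ← Set.preimage_iUnion,
      Projectivization.iUnion_submodule_eq_univ, Set.preimage_univ]

theorem stmt_11 (F V : Type*) [Field F] [AddCommGroup V] [Module F V]
    (k : ℕ) (hk : 1 ≤ k) (hdim : (k : Cardinal) < Module.rank F V) :
    ∃ W : Projectivization F (Fin (k + 1) → F) → Submodule F V,
      (∀ x, Module.finrank F (V ⧸ W x) = k) ∧
      (⋃ x, (W x : Set V)) = Set.univ :=
  stmt_11_general F V k hdim
end

section
/- If a vector space V over a field F is covered by finitely many proper subspaces V_1, ..., V_n, then n ≥ |F| + 1 when F is finite, and no finite n suffices when F is infinite. Equivalently: if V = V_1 ∪ ... ∪ V_n with each V_i proper, then n > |F|. -/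
open Cardinal

section

variable {ι K M : Type*} [Field K] [AddCommGroup M] [Module K M]

lemma Submodule.subsingleton_setOf_add_smul_mem {p : Submodule K M} {w : M} (hw : w ∉ p) (v : M) :
    {t : K | v + t • w ∈ p}.Subsingleton := by
  intro t₁ ht₁ t₂ ht₂
  by_contra hne
  have hdiff : (t₁ - t₂) • w ∈ p := by
    convert p.sub_mem ht₁ ht₂ using 1
    module
  exact hw ((p.smul_mem_iff (sub_ne_zero.mpr hne)).mp hdiff)

/-- The line `v + K w` misses `q` and meets each `p i` at most once, so it has a point outside
all of them as soon as `K` has more elements than `s`. -/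
lemma Submodule.exists_add_smul_forall_notMem (s : Finset ι) (p : ι → Submodule K M)
    {q : Submodule K M} {v w : M} (hv : v ∉ q) (hwq : w ∈ q) (hw : ∀ i ∈ s, w ∉ p i)
    (hs : (s.card : Cardinal) < #K) :
    ∃ t : K, v + t • w ∉ q ∧ ∀ i ∈ s, v + t • w ∉ p i := by
  by_contra! hcover
  have hmem (t : K) : ∃ i : s, v + t • w ∈ p i := by
    obtain ⟨i, hi, hmem⟩ := hcover t (fun h => hv (by simpa using q.sub_mem h (q.smul_mem t hwq)))
    exact ⟨⟨i, hi⟩, hmem⟩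
  choose f hf using hmem
  have hf_inj : Function.Injective f := fun t₁ t₂ heq =>
    subsingleton_setOf_add_smul_mem (hw _ (f t₁).2) v (hf t₁) (heq ▸ hf t₂)
  have := lift_mk_le_lift_mk_of_injective hf_inj
  rw [mk_coe_finset, lift_natCast, lift_le_nat_iff] at this
  exact this.not_gt hs

/-- Sharpens `Submodule.iUnion_ssubset_of_forall_ne_top_of_card_lt`, which needs `#s < #K`. -/
lemma Submodule.exists_forall_notMem_of_card_le (s : Finset ι) (p : ι → Submodule K M)
    (hp : ∀ i ∈ s, p i ≠ ⊤) (hs : (s.card : Cardinal) ≤ #K) :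
    ∃ x : M, ∀ i ∈ s, x ∉ p i := by
  classical
  induction s using Finset.induction_on with
  | empty => exact ⟨0, by simp⟩
  | insert j s hj ih =>
    rw [Finset.card_insert_of_notMem hj] at hs
    have hs' : (s.card : Cardinal) < #K := (Nat.cast_lt.mpr s.card.lt_succ_self).trans_le hs
    obtain ⟨w, hw⟩ := ih (fun i hi => hp i (Finset.mem_insert_of_mem hi)) hs'.le
    by_cases hwj : w ∈ p j
    · obtain ⟨v, -, hv⟩ := SetLike.exists_of_lt (hp j (Finset.mem_insert_self j s)).lt_top
      obtain ⟨t, htj, hts⟩ := exists_add_smul_forall_notMem s p hv hwj hw hs'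
      exact ⟨v + t • w, Finset.forall_mem_insert _ _ _ |>.mpr ⟨htj, hts⟩⟩
    · exact ⟨w, Finset.forall_mem_insert _ _ _ |>.mpr ⟨hwj, hw⟩⟩

end

theorem stmt_12 (F V : Type*) [Field F] [AddCommGroup V] [Module F V]
    (n : ℕ) (W : Fin n → Submodule F V) (hW : ∀ i, W i ≠ ⊤)
    (hcov : (⋃ i, (W i : Set V)) = Set.univ) :
    Cardinal.mk F < n := by
  by_contra! hle
  obtain ⟨x, hx⟩ := Submodule.exists_forall_notMem_of_card_le Finset.univ W (fun i _ => hW i)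
    (by simpa using hle)
  obtain ⟨i, hi⟩ := Set.mem_iUnion.mp (hcov ▸ Set.mem_univ x)
  exact hx i (Finset.mem_univ i) hi
end

section
/- Suppose V_1, ..., V_n are proper subspaces of a finite-dimensional vector space V covering V, such that no V_i is contained in the union of the others. If v_1 ∈ V_1 and v_2 ∈ V_2 lie only in V_1 and V_2 respectively, then the map sending each element of {v_1 + αv_2 : α ∈ F} ∪ {v_2} to an index i with the element in V_i must fail to be injective only if two elements of this set lie in a common V_i, which forces v_1, v_2 ∈ V_i, contradicting i distinct. Hence n ≥ |F| + 1. -/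
/-!
Pick `v₁` lying only in `W i₁` and `v₂` lying only in `W i₂` (minimality), and send `v₂` to `i₂`
and each `v₁ + α • v₂` to an index of a subspace containing it. A subspace containing two points
of the line `v₁ + F • v₂` contains `v₂`, hence is `W i₂`, and then also contains `v₁`, which is
impossible. So this map `Option F → ι` is injective.
-/

namespace Submodule

variable {F V : Type*} [Field F] [AddCommGroup V] [Module F V]

theorem mem_of_add_smul_mem_of_add_smul_mem {p : Submodule F V} {x y : V} {a b : F}
    (hab : a ≠ b) (ha : x + a • y ∈ p) (hb : x + b • y ∈ p) : y ∈ p := by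
  have hsub : (a - b) • y ∈ p := by
    simpa [sub_smul] using p.sub_mem ha hb
  exact (p.smul_mem_iff (sub_ne_zero.mpr hab)).mp hsub

theorem mem_of_add_smul_mem {p : Submodule F V} {x y : V} {a : F}
    (hy : y ∈ p) (h : x + a • y ∈ p) : x ∈ p :=
  (p.add_mem_iff_left (p.smul_mem a hy)).mp h

variable {ι : Type*} {W : ι → Submodule F V}

theorem nontrivial_of_iUnion_eq_univ (hW : ∀ i, W i ≠ ⊤)
    (hcov : (⋃ i, (W i : Set V)) = Set.univ) : Nontrivial ι := by
  obtain ⟨i, -⟩ := Set.iUnion_eq_univ_iff.mp hcov 0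
  by_contra hι
  have : Subsingleton ι := not_nontrivial_iff_subsingleton.mp hι
  refine hW i (eq_top_iff.mpr fun v _ => ?_)
  obtain ⟨j, hj⟩ := Set.iUnion_eq_univ_iff.mp hcov v
  rwa [Subsingleton.elim j i] at hj

theorem exists_forall_mem_iff_eq {i : ι}
    (hmin : ¬ ((W i : Set V) ⊆ ⋃ j ∈ ({i}ᶜ : Set ι), (W j : Set V))) :
    ∃ v, ∀ j, v ∈ W j ↔ j = i := by
  obtain ⟨v, hvi, hv⟩ := Set.not_subset.mp hmin
  refine ⟨v, fun j => ⟨fun hj => by_contra fun hji => hv (Set.mem_biUnion hji hj), ?_⟩⟩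
  rintro rfl
  exact hvi

theorem nonempty_option_embedding_of_iUnion_eq_univ (hcov : (⋃ i, (W i : Set V)) = Set.univ)
    {i₁ i₂ : ι} (hi : i₁ ≠ i₂) {v₁ v₂ : V}
    (hv₁ : ∀ j, v₁ ∈ W j ↔ j = i₁) (hv₂ : ∀ j, v₂ ∈ W j ↔ j = i₂) :
    Nonempty (Option F ↪ ι) := by
  choose f hf using fun α : F => Set.iUnion_eq_univ_iff.mp hcov (v₁ + α • v₂)
  have hf_ne : ∀ α, f α ≠ i₂ := fun α h =>
    hi.symm ((hv₁ i₂).mp (mem_of_add_smul_mem ((hv₂ i₂).mpr rfl) (h ▸ hf α)))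
  have hf_inj : Function.Injective f := fun α β h => by_contra fun hαβ =>
    hf_ne α ((hv₂ _).mp (mem_of_add_smul_mem_of_add_smul_mem hαβ (hf α) (h ▸ hf β)))
  refine ⟨⟨fun o => o.elim i₂ f, ?_⟩⟩
  rintro (_ | α) (_ | β) h
  · rfl
  · exact absurd h.symm (hf_ne β)
  · exact absurd h (hf_ne α)
  · exact congrArg some (hf_inj h)

end Submodule

theorem stmt_13 (F V : Type*) [Field F] [AddCommGroup V] [Module F V]
    (n : ℕ) (W : Fin n → Submodule F V) (hW : ∀ i, W i ≠ ⊤)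
    (hcov : (⋃ i, (W i : Set V)) = Set.univ)
    (hmin : ∀ i, ¬ ((W i : Set V) ⊆ ⋃ j ∈ ({i}ᶜ : Set (Fin n)), (W j : Set V))) :
    Cardinal.mk F + 1 ≤ n := by
  have := Submodule.nontrivial_of_iUnion_eq_univ hW hcov
  obtain ⟨i₁, i₂, hi⟩ := exists_pair_ne (Fin n)
  obtain ⟨v₁, hv₁⟩ := Submodule.exists_forall_mem_iff_eq (hmin i₁)
  obtain ⟨v₂, hv₂⟩ := Submodule.exists_forall_mem_iff_eq (hmin i₂)
  have hemb := Submodule.nonempty_option_embedding_of_iUnion_eq_univ (F := F) hcov hi hv₁ hv₂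
  simpa [Cardinal.mk_option] using Cardinal.lift_mk_le'.mpr hemb
end

section
/- Let V be an n-dimensional vector space over F_q and let k with 1 ≤ k < n. If V is the union of a family of subspaces each of codimension at least k, then the family has at least (q^n - 1)/(q^{n-k} - 1) members (hence at least ⌈(q^n-1)/(q^{n-k}-1)⌉). -/
/-! Each nonzero vector lies in some member of the family, and a subspace of codimension at least `k`
has at most `q ^ (n - k) - 1` nonzero vectors, so the `q ^ n - 1` nonzero vectors of `V` force at
least `(q ^ n - 1) / (q ^ (n - k) - 1)` members. -/

theorem Submodule.natCard_sub_one_le_card_mul_of_biUnion_eq_univ {R M : Type*} [Semiring R]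
    [AddCommMonoid M] [Module R M] [Finite M] {s : Finset (Submodule R M)} {N : ℕ}
    (hcard : ∀ W ∈ s, Nat.card W ≤ N) (hcov : ⋃ W ∈ s, (W : Set M) = Set.univ) :
    Nat.card M - 1 ≤ s.card * (N - 1) := by
  have hcover : ({0}ᶜ : Set M) ⊆ ⋃ W ∈ s, ((W : Set M) \ {0}) := by
    intro v hv
    obtain ⟨W, hW, hvW⟩ := Set.mem_iUnion₂.1 (hcov ▸ Set.mem_univ v)
    exact Set.mem_biUnion hW ⟨hvW, hv⟩
  calc Nat.card M - 1 = ({0}ᶜ : Set M).ncard := by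
        rw [Set.ncard_compl, Set.ncard_singleton]
    _ ≤ (⋃ W ∈ s, ((W : Set M) \ {0})).ncard := Set.ncard_le_ncard hcover
    _ ≤ ∑ W ∈ s, ((W : Set M) \ {0}).ncard := s.set_ncard_biUnion_le _
    _ ≤ ∑ _W ∈ s, (N - 1) := Finset.sum_le_sum fun W hW => by
        rw [Set.ncard_sdiff_singleton_of_mem W.zero_mem, ← Nat.card_coe_set_eq]
        exact Nat.sub_le_sub_right (hcard W hW) 1
    _ = s.card * (N - 1) := by rw [Finset.sum_const, smul_eq_mul]

theorem stmt_15_general (F : Type*) [Field F] [Fintype F] (q n k : ℕ)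
    (hq : Fintype.card F = q)
    (s : Finset (Submodule F (Fin n → F)))
    (hdim : ∀ W ∈ s, Module.finrank F W ≤ n - k)
    (hcov : (⋃ W ∈ s, (W : Set (Fin n → F))) = Set.univ) :
    ((q ^ n - 1 : ℚ) / (q ^ (n - k) - 1)) ≤ s.card := by
  rw [← Nat.card_eq_fintype_card] at hq
  have hq1 : 1 ≤ q := hq ▸ Nat.card_pos
  have hcardV : Nat.card (Fin n → F) = q ^ n := by rw [Nat.card_fun, hq, Nat.card_fin]
  have hcardW : ∀ W ∈ s, Nat.card W ≤ q ^ (n - k) := fun W hW => by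
    rw [Module.natCard_eq_pow_finrank (K := F), hq]
    exact Nat.pow_le_pow_right hq1 (hdim W hW)
  have hcount := Submodule.natCard_sub_one_le_card_mul_of_biUnion_eq_univ hcardW hcov
  rw [hcardV] at hcount
  have hpow : ∀ m, (1 : ℚ) ≤ q ^ m := fun m => one_le_pow₀ (by exact_mod_cast hq1)
  refine div_le_of_le_mul₀ (sub_nonneg.2 (hpow _)) (Nat.cast_nonneg _) ?_
  have := (Nat.cast_le (α := ℚ)).2 hcount
  push_cast [Nat.one_le_pow _ _ hq1] at this
  exact this

theorem stmt_15 (F : Type*) [Field F] [Fintype F] (q n k : ℕ)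
    (hq : Fintype.card F = q) (hk1 : 1 ≤ k) (hkn : k < n)
    (s : Finset (Submodule F (Fin n → F)))
    (hdim : ∀ W ∈ s, Module.finrank F W ≤ n - k)
    (hcov : (⋃ W ∈ s, (W : Set (Fin n → F))) = Set.univ) :
    ((q ^ n - 1 : ℚ) / (q ^ (n - k) - 1)) ≤ s.card :=
  stmt_15_general F q n k hq s hdim hcov
end

section
/- Let V = F_q^n and let d satisfy 1 < d < n/2. Then V can be partitioned into one subspace of dimension n-d and q^{n-d} subspaces of dimension d, all pairwise intersecting only in 0 and covering V. -/
/-!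
Identify `V` with `F^d × E`, where `E` is the field with `q^(n-d)` elements (an `F`-space of
dimension `n - d`), and fix an `F`-linear embedding `ι : F^d → E`, possible since `d ≤ n - d`.
The subspace `0 × E` together with the graphs of `u ↦ a * ι u`, one for each `a ∈ E`, partition
`F^d × E`: two graphs for `a ≠ b` meet only in `0` because `(a - b) * ι u = 0` forces `u = 0`,
and a vector `(u, x)` with `u ≠ 0` lies on the graph for `a = x * (ι u)⁻¹`.
-/

open Module LinearMap

theorem Submodule.mem_snd_iff {R M M₂ : Type*} [Semiring R] [AddCommMonoid M] [AddCommMonoid M₂]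
    [Module R M] [Module R M₂] {x : M × M₂} : x ∈ Submodule.snd R M M₂ ↔ x.1 = 0 := by
  simp [Submodule.snd]

namespace LinearMap

theorem finrank_graph {R M M₂ : Type*} [Ring R] [AddCommGroup M] [AddCommGroup M₂]
    [Module R M] [Module R M₂] (f : M →ₗ[R] M₂) : finrank R f.graph = finrank R M := by
  rw [graph_eq_range_prod]
  exact finrank_range_of_inj fun x y h => congrArg Prod.fst h

theorem graph_inf_snd_eq_bot {R M M₂ : Type*} [Ring R] [AddCommGroup M]
    [AddCommGroup M₂] [Module R M] [Module R M₂] (f : M →ₗ[R] M₂) :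
    f.graph ⊓ Submodule.snd R M M₂ = ⊥ := by
  refine eq_bot_iff.mpr fun x hx => ?_
  obtain ⟨hgraph, hsnd⟩ := Submodule.mem_inf.mp hx
  rw [mem_graph_iff] at hgraph
  rw [Submodule.mem_snd_iff] at hsnd
  rw [Submodule.mem_bot, Prod.ext_iff, hgraph, hsnd]
  simp

section Spread

variable {F E U : Type*} [CommRing F] [DivisionRing E] [Algebra F E] [AddCommGroup U] [Module F U]
  {ι : U →ₗ[F] E}

theorem graph_mulLeft_comp_inf_eq_bot (hι : Function.Injective ι) {a b : E} (hab : a ≠ b) :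
    (mulLeft F a ∘ₗ ι).graph ⊓ (mulLeft F b ∘ₗ ι).graph = ⊥ := by
  refine eq_bot_iff.mpr fun x hx => ?_
  obtain ⟨ha, hb⟩ := Submodule.mem_inf.mp hx
  rw [mem_graph_iff] at ha hb
  have hx₁ : ι x.1 = 0 := by
    have : (a - b) * ι x.1 = 0 := by
      simpa [sub_mul, sub_eq_zero] using ha.symm.trans hb
    exact (mul_eq_zero.mp this).resolve_left (sub_ne_zero.mpr hab)
  have hx₁' : x.1 = 0 := (map_eq_zero_iff ι hι).mp hx₁
  rw [Submodule.mem_bot, Prod.ext_iff, ha, hx₁']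
  simp

theorem snd_union_iUnion_graph_mulLeft_comp (hι : Function.Injective ι) :
    (Submodule.snd F U E : Set (U × E)) ∪ ⋃ a : E, ((mulLeft F a ∘ₗ ι).graph : Set (U × E)) =
      Set.univ := by
  refine Set.eq_univ_of_forall fun x => ?_
  by_cases hx₁ : x.1 = 0
  · exact Or.inl (Submodule.mem_snd_iff.mpr hx₁)
  have hιx : ι x.1 ≠ 0 := (map_ne_zero_iff ι hι).mpr hx₁
  refine Or.inr (Set.mem_iUnion.mpr ⟨x.2 * (ι x.1)⁻¹, ?_⟩)
  rw [SetLike.mem_coe, mem_graph_iff]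
  simp [inv_mul_cancel₀ hιx]

end Spread

end LinearMap

theorem FiniteField.exists_extension_finrank_eq (F : Type*) [Field F] [Finite F] {m : ℕ}
    (hm : m ≠ 0) : ∃ (E : Type) (_ : Field E) (_ : Algebra F E), finrank F E = m := by
  obtain ⟨p, _⟩ := CharP.exists F
  have : Fact p.Prime := ⟨CharP.char_is_prime F p⟩
  have : NeZero m := ⟨hm⟩
  exact ⟨Extension F p m, inferInstance, inferInstance, finrank_extension F p m⟩

theorem stmt_17_general (F : Type*) [Field F] [Fintype F] (q n d : ℕ)
    (hq : Fintype.card F = q) (hdn : 2 * d < n) :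
    ∃ (W₀ : Submodule F (Fin n → F)) (f : Fin (q ^ (n - d)) → Submodule F (Fin n → F)),
      Module.finrank F W₀ = n - d ∧
      (∀ i, Module.finrank F (f i) = d) ∧
      (∀ i, W₀ ⊓ f i = ⊥) ∧
      (∀ i j, i ≠ j → f i ⊓ f j = ⊥) ∧
      (W₀ : Set (Fin n → F)) ∪ (⋃ i, (f i : Set (Fin n → F))) = Set.univ := by
  obtain ⟨E, _, _, hE⟩ := FiniteField.exists_extension_finrank_eq F (m := n - d) (by omega)
  have : FiniteDimensional F E := .of_finrank_pos (by omega)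
  have : Finite E := Module.finite_of_finite F
  obtain ⟨v, hv⟩ := exists_linearIndependent_of_le_finrank (R := F) (M := E) (n := d) (by omega)
  have hι := hv.fintypeLinearCombination_injective
  let σ : ((Fin d → F) × E) ≃ₗ[F] (Fin n → F) :=
    .ofFinrankEq _ _ (by simp only [finrank_prod, finrank_fin_fun, hE]; omega)
  have hcard : Nat.card E = q ^ (n - d) := by
    rw [natCard_eq_pow_finrank (K := F), hE, Nat.card_eq_fintype_card, hq]
  let e : Fin (q ^ (n - d)) ≃ E := (finCongr hcard.symm).trans (Finite.equivFin E).symm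
  let f a := (mulLeft F a ∘ₗ Fintype.linearCombination F v).graph
  refine ⟨(Submodule.snd F _ E).map σ.toLinearMap, fun i => (f (e i)).map σ.toLinearMap, ?_, ?_, ?_, ?_, ?_⟩
  · rw [LinearEquiv.finrank_map_eq, (Submodule.sndEquiv F _ E).finrank_eq, hE]
  · intro i
    rw [LinearEquiv.finrank_map_eq, finrank_graph, finrank_fin_fun]
  · intro i
    rw [← Submodule.map_inf _ σ.injective, inf_comm, graph_inf_snd_eq_bot, Submodule.map_bot]
  · intro i j hij
    rw [← Submodule.map_inf _ σ.injective,
      graph_mulLeft_comp_inf_eq_bot hι (e.injective.ne hij), Submodule.map_bot]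
  · simp only [Submodule.map_coe, ← Set.image_iUnion, ← Set.image_union,
      e.surjective.iUnion_comp fun a => (f a : Set ((Fin d → F) × E))]
    exact (congrArg (σ '' ·) (snd_union_iUnion_graph_mulLeft_comp hι)).trans
      (Set.image_univ_of_surjective σ.surjective)

theorem stmt_17 (F : Type*) [Field F] [Fintype F] (q n d : ℕ)
    (hq : Fintype.card F = q) (hd : 1 < d) (hdn : 2 * d < n) :
    ∃ (W₀ : Submodule F (Fin n → F)) (f : Fin (q ^ (n - d)) → Submodule F (Fin n → F)),
      Module.finrank F W₀ = n - d ∧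
      (∀ i, Module.finrank F (f i) = d) ∧
      (∀ i, W₀ ⊓ f i = ⊥) ∧
      (∀ i j, i ≠ j → f i ⊓ f j = ⊥) ∧
      (W₀ : Set (Fin n → F)) ∪ (⋃ i, (f i : Set (Fin n → F))) = Set.univ :=
  stmt_17_general F q n d hq hdn
end

section
/- Let V be an n-dimensional vector space over F_q and 1 ≤ k < n. Then V can be covered by exactly ⌈(q^n - 1)/(q^{n-k} - 1)⌉ subspaces of codimension k, and this number is minimal. -/
/-!
Lower bound: each of the `m` subspaces contains `q ^ (n - k) - 1` nonzero vectors, and together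
they contain all `q ^ n - 1` of them.

Upper bound, with `d = n - k` and `e = k`: identify `F^n` with `F^d × K` where `K = 𝔽_{q^e}`, and
pick a linear map `T : F^d → K` of maximal rank. The `q ^ e` graphs of `α • T`, `α ∈ K`, contain
every `(x, y)` with `T x ≠ 0`; the remaining vectors form `ker T × K`, of dimension
`max d e < n`, which is covered by induction. Since
`q ^ n - 1 = q ^ e * (q ^ d - 1) + (q ^ e - 1)`, the count is
`q ^ e + ⌈(q ^ e - 1) / (q ^ d - 1)⌉ = ⌈(q ^ n - 1) / (q ^ d - 1)⌉`.
-/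

open Module Function LinearMap

theorem Nat.mul_add_ceilDiv {a : ℕ} (ha : 0 < a) (b c : ℕ) :
    (a * b + c) ⌈/⌉ a = b + c ⌈/⌉ a := by
  have : a * b + c + a - 1 = a * b + (c + a - 1) := by omega
  rw [Nat.ceilDiv_eq_add_pred_div, Nat.ceilDiv_eq_add_pred_div, this, Nat.mul_add_div ha]

theorem Nat.pow_add_sub_one_ceilDiv {q d : ℕ} (hq : 2 ≤ q) (hd : 1 ≤ d) (e : ℕ) :
    (q ^ (d + e) - 1) ⌈/⌉ (q ^ d - 1) = q ^ e + (q ^ e - 1) ⌈/⌉ (q ^ d - 1) := by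
  have hqd : 2 ≤ q ^ d := Nat.one_lt_pow (by omega) (by omega)
  have hqe : 1 ≤ q ^ e := Nat.one_le_pow _ _ (by omega)
  have hsplit : q ^ (d + e) - 1 = (q ^ d - 1) * q ^ e + (q ^ e - 1) := by
    have : q ^ e ≤ q ^ d * q ^ e := Nat.le_mul_of_pos_left _ (by omega)
    rw [pow_add, Nat.sub_mul, one_mul]
    omega
  rw [hsplit, Nat.mul_add_ceilDiv (by omega)]

theorem Nat.pow_sub_one_ceilDiv_eq_one {q d e : ℕ} (hq : 2 ≤ q) (he : 1 ≤ e) (hed : e ≤ d) :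
    (q ^ e - 1) ⌈/⌉ (q ^ d - 1) = 1 := by
  have hqe : 2 ≤ q ^ e := Nat.one_lt_pow (by omega) (by omega)
  have hle : q ^ e ≤ q ^ d := Nat.pow_le_pow_right (by omega) hed
  refine le_antisymm ((ceilDiv_le_iff_le_mul (by omega)).2 (by omega)) ?_
  by_contra! h
  have := (ceilDiv_le_iff_le_mul (a := q ^ d - 1) (by omega)).1 (Nat.lt_one_iff.1 h).le
  omega

theorem Nat.pow_max_sub_one_ceilDiv {q d e : ℕ} (hq : 2 ≤ q) (hd : 1 ≤ d) (he : 1 ≤ e) :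
    (q ^ max d e - 1) ⌈/⌉ (q ^ d - 1) = (q ^ e - 1) ⌈/⌉ (q ^ d - 1) := by
  rcases le_total e d with hed | hde
  · rw [max_eq_left hed, pow_sub_one_ceilDiv_eq_one hq hd le_rfl,
      pow_sub_one_ceilDiv_eq_one hq he hed]
  · rw [max_eq_right hde]

theorem FiniteField.exists_finrank_eq (F : Type*) [Field F] [Finite F] {e : ℕ} (he : e ≠ 0) :
    ∃ (K : Type) (_ : Field K) (_ : Finite K) (_ : Algebra F K), finrank F K = e := by
  let p := ringChar F
  have : Fact p.Prime := ⟨CharP.char_is_prime F p⟩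
  let : Algebra (ZMod p) F := ZMod.algebra F p
  have hm : finrank (ZMod p) F ≠ 0 := finrank_pos.ne'
  let K := GaloisField p (finrank (ZMod p) F * e)
  have hK : finrank (ZMod p) K = finrank (ZMod p) F * e :=
    GaloisField.finrank p (mul_ne_zero hm he)
  obtain ⟨f⟩ := nonempty_algHom_of_finrank_dvd (K := F) (L := K) (hK ▸ dvd_mul_right _ _)
  algebraize [f.toRingHom]
  refine ⟨K, inferInstance, inferInstance, inferInstance, ?_⟩
  have := finrank_mul_finrank (ZMod p) F K
  rw [hK] at this
  exact Nat.eq_of_mul_eq_mul_left (Nat.pos_of_ne_zero hm) this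

section

variable {F V W : Type*} [Field F] [AddCommGroup V] [Module F V] [AddCommGroup W] [Module F W]

variable (F V W) in
theorem LinearMap.exists_finrank_ker_eq [FiniteDimensional F V] [FiniteDimensional F W] :
    ∃ T : V →ₗ[F] W, finrank F (ker T) = finrank F V - finrank F W := by
  rcases le_total (finrank F V) (finrank F W) with hVW | hWV
  · obtain ⟨T, hT⟩ := finrank_le_iff_exists_linearMap.1 hVW
    refine ⟨T, ?_⟩
    rw [ker_eq_bot.2 hT, finrank_bot]
    omega
  · obtain ⟨g, hg⟩ := finrank_le_iff_exists_linearMap.1 hWV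
    obtain ⟨T, hT⟩ := g.exists_leftInverse_of_injective (ker_eq_bot.2 hg)
    have hsurj : range T = ⊤ := range_eq_top.2 fun w => ⟨g w, LinearMap.congr_fun hT w⟩
    refine ⟨T, ?_⟩
    have := T.finrank_range_add_finrank_ker
    rw [hsurj, finrank_top] at this
    omega

theorem LinearMap.finrank_graph_s18 [FiniteDimensional F V] (T : V →ₗ[F] W) :
    finrank F T.graph = finrank F V := by
  rw [graph_eq_range_prod]
  exact finrank_range_of_inj fun x y h => by simpa using congrArg Prod.fst h

theorem LinearMap.mem_graph_div_smul {K : Type*} [Field K] [Algebra F K] (T : V →ₗ[F] K)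
    {x : V × K} (hx : T x.1 ≠ 0) : x ∈ ((x.2 / T x.1) • T).graph := by
  rw [mem_graph_iff, smul_apply, smul_eq_mul, div_mul_cancel₀ _ hx]

variable (F V) in
def HasSubspaceCover (d m : ℕ) : Prop :=
  ∃ f : Fin m → Submodule F V, (∀ i, finrank F (f i) = d) ∧ ⋃ i, (f i : Set V) = Set.univ

theorem hasSubspaceCover_of_finite {ι : Type*} [Finite ι] {d : ℕ} (f : ι → Submodule F V)
    (hf : ∀ i, finrank F (f i) = d) (hcov : ⋃ i, (f i : Set V) = Set.univ) :
    HasSubspaceCover F V d (Nat.card ι) :=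
  ⟨f ∘ (Finite.equivFin ι).symm, fun _ => hf _,
    ((Finite.equivFin ι).symm.surjective.iUnion_comp fun i => (f i : Set V)).trans hcov⟩

namespace HasSubspaceCover

variable {d m : ℕ}

theorem exists_map (h : HasSubspaceCover F V d m) {φ : V →ₗ[F] W} (hφ : Injective φ) :
    ∃ f : Fin m → Submodule F W,
      (∀ i, finrank F (f i) = d) ∧ ⋃ i, (f i : Set W) = Set.range φ := by
  obtain ⟨f, hf, hcov⟩ := h
  refine ⟨fun i => (f i).map φ, fun i => ?_, ?_⟩
  · rw [← hf i]
    exact (Submodule.equivMapOfInjective φ hφ (f i)).finrank_eq.symm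
  · simp_rw [Submodule.map_coe, ← Set.image_iUnion, hcov, Set.image_univ]

theorem linearEquiv (h : HasSubspaceCover F V d m) (e : V ≃ₗ[F] W) :
    HasSubspaceCover F W d m := by
  obtain ⟨f, hf, hcov⟩ := h.exists_map e.injective
  exact ⟨f, hf, hcov.trans e.surjective.range_eq⟩

theorem prod_of_ker [FiniteDimensional F V] {K : Type*} [Field K] [Finite K] [Algebra F K]
    (T : V →ₗ[F] K) (h : HasSubspaceCover F (ker T × K) (finrank F V) m) :
    HasSubspaceCover F (V × K) (finrank F V) (Nat.card K + m) := by
  let φ := (ker T).subtype.prodMap (LinearMap.id : K →ₗ[F] K)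
  obtain ⟨g, hg, hcov⟩ := h.exists_map (φ := φ) (Subtype.val_injective.prodMap injective_id)
  rw [← Nat.card_fin m, ← Nat.card_sum]
  refine hasSubspaceCover_of_finite (Sum.elim (fun α : K => (α • T).graph) g) ?_ ?_
  · rintro (α | i)
    · exact finrank_graph_s18 _
    · exact hg i
  · refine Set.eq_univ_of_forall fun x => ?_
    by_cases hx : T x.1 = 0
    · have hxφ : x ∈ Set.range φ := ⟨(⟨x.1, hx⟩, x.2), rfl⟩
      rw [← hcov] at hxφ
      obtain ⟨i, hi⟩ := Set.mem_iUnion.1 hxφ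
      exact Set.mem_iUnion_of_mem (Sum.inr i) hi
    · exact Set.mem_iUnion_of_mem (Sum.inl _) (mem_graph_div_smul T hx)

theorem card_sub_one_le [Finite F] [Finite V] (h : HasSubspaceCover F V d m) :
    Nat.card V - 1 ≤ m * (Nat.card F ^ d - 1) := by
  classical
  have := Fintype.ofFinite V
  obtain ⟨f, hf, hcov⟩ := h
  have hsub : Finset.univ.erase (0 : V) ⊆
      Finset.univ.biUnion fun i => (f i : Set V).toFinset.erase 0 := by
    intro x hx
    obtain ⟨i, hi⟩ := Set.mem_iUnion.1 (hcov ▸ Set.mem_univ x)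
    exact Finset.mem_biUnion.2 ⟨i, Finset.mem_univ _,
      Finset.mem_erase.2 ⟨(Finset.mem_erase.1 hx).1, Set.mem_toFinset.2 hi⟩⟩
  calc Nat.card V - 1 = (Finset.univ.erase (0 : V)).card := by
        rw [Finset.card_erase_of_mem (Finset.mem_univ _), Finset.card_univ,
          Nat.card_eq_fintype_card]
    _ ≤ _ := Finset.card_le_card hsub
    _ ≤ m * (Nat.card F ^ d - 1) := by
      refine (Finset.card_biUnion_le_card_mul _ _ (Nat.card F ^ d - 1) fun i _ => ?_).trans_eq
        (by rw [Finset.card_univ, Fintype.card_fin])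
      rw [Finset.card_erase_of_mem (Set.mem_toFinset.2 (f i).zero_mem), Set.toFinset_card,
        ← Nat.card_eq_fintype_card, ← hf i, ← natCard_eq_pow_finrank]
      rfl

end HasSubspaceCover

end

theorem hasSubspaceCover_fin (F : Type*) [Field F] [Finite F] {d : ℕ} (hd : 1 ≤ d) (n : ℕ)
    (hdn : d ≤ n) :
    HasSubspaceCover F (Fin n → F) d ((Nat.card F ^ n - 1) ⌈/⌉ (Nat.card F ^ d - 1)) := by
  have hq : 2 ≤ Nat.card F := Finite.one_lt_card
  induction n using Nat.strong_induction_on with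
  | _ n ih =>
  rcases hdn.eq_or_lt with rfl | hlt
  · rw [Nat.pow_sub_one_ceilDiv_eq_one hq hd le_rfl]
    exact ⟨fun _ => ⊤, fun _ => by simp, Set.iUnion_const _⟩
  obtain ⟨e, he, rfl⟩ : ∃ e, 1 ≤ e ∧ n = d + e := ⟨n - d, by omega, by omega⟩
  obtain ⟨K, _, _, _, hK⟩ := FiniteField.exists_finrank_eq F (e := e) (by omega)
  obtain ⟨T, hT⟩ := LinearMap.exists_finrank_ker_eq F (Fin d → F) K
  obtain ⟨Φ⟩ : Nonempty ((Fin (max d e) → F) ≃ₗ[F] (ker T × K)) := by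
    refine FiniteDimensional.nonempty_linearEquiv_of_finrank_eq ?_
    rw [finrank_prod, hT, finrank_fin_fun, finrank_fin_fun, hK]
    omega
  obtain ⟨Ψ⟩ : Nonempty (((Fin d → F) × K) ≃ₗ[F] (Fin (d + e) → F)) := by
    refine FiniteDimensional.nonempty_linearEquiv_of_finrank_eq ?_
    rw [finrank_prod, finrank_fin_fun, finrank_fin_fun, hK]
  have hker : HasSubspaceCover F (ker T × K) (finrank F (Fin d → F))
      ((Nat.card F ^ e - 1) ⌈/⌉ (Nat.card F ^ d - 1)) := by
    rw [finrank_fin_fun, ← Nat.pow_max_sub_one_ceilDiv hq hd he]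
    exact (ih (max d e) (by omega) (le_max_left d e)).linearEquiv Φ
  have hcov := hker.prod_of_ker T
  rw [finrank_fin_fun, natCard_eq_pow_finrank (K := F), hK,
    ← Nat.pow_add_sub_one_ceilDiv hq hd] at hcov
  exact hcov.linearEquiv Ψ

theorem stmt_18_general (F : Type*) [Field F] [Fintype F] (q n k : ℕ)
    (hq : Fintype.card F = q) (hkn : k < n) :
    IsLeast {m : ℕ | ∃ f : Fin m → Submodule F (Fin n → F),
        (∀ i, Module.finrank F (f i) = n - k) ∧ (⋃ i, (f i : Set (Fin n → F))) = Set.univ}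
      (((q ^ n - 1) + (q ^ (n - k) - 1) - 1) / (q ^ (n - k) - 1)) := by
  subst hq
  rw [Fintype.card_eq_nat_card, ← Nat.ceilDiv_eq_add_pred_div]
  have hq : 2 ≤ Nat.card F := Finite.one_lt_card
  have hqd : 2 ≤ Nat.card F ^ (n - k) := Nat.one_lt_pow (by omega) hq
  refine ⟨hasSubspaceCover_fin F (by omega) n (Nat.sub_le n k), fun m hm => ?_⟩
  have hcard := HasSubspaceCover.card_sub_one_le hm
  rw [Nat.card_fun, Nat.card_fin, mul_comm] at hcard
  exact (ceilDiv_le_iff_le_mul (by omega)).2 hcard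

theorem stmt_18 (F : Type*) [Field F] [Fintype F] (q n k : ℕ)
    (hq : Fintype.card F = q) (hk1 : 1 ≤ k) (hkn : k < n) :
    IsLeast {m : ℕ | ∃ f : Fin m → Submodule F (Fin n → F),
        (∀ i, Module.finrank F (f i) = n - k) ∧ (⋃ i, (f i : Set (Fin n → F))) = Set.univ}
      (((q ^ n - 1) + (q ^ (n - k) - 1) - 1) / (q ^ (n - k) - 1)) :=
  stmt_18_general F q n k hq hkn
end

section
/- Let V be an infinite-dimensional vector space over the finite field F_q and k ≥ 1. Then V can be covered by q^k + 1 subspaces of codimension k, and cannot be covered by q^k or fewer subspaces of codimension at least k. -/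
/-!
Covering: let `K` be the extension of `F` of degree `k`. The `q ^ k + 1` lines through the origin
of the plane `K × K` are `F`-subspaces of codimension `k` covering it, and their preimages under
any surjection `V → K × K` (which exists since `V` is infinite-dimensional) cover `V`.

Non-covering: a subspace of codimension at least `k` has additive index `0` (infinite) or at least
`q ^ k`. By B. H. Neumann's lemma the reciprocal indices of a covering by `m ≤ q ^ k` subgroups sum
to at least `1`, which forces equality, and then the finite-index members would be pairwise
disjoint, although they all contain `0`.
-/

open scoped Pointwise

section Spread

variable (K : Type*) [Field K]

/-- The kernels are the lines `{0} × K` and `y = a x` of the plane `K × K`. -/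
def spreadFunctional : Option K → (K × K →ₗ[K] K)
  | none => LinearMap.fst K K K
  | some a => LinearMap.snd K K K - a • LinearMap.fst K K K

variable {K}

theorem spreadFunctional_surjective (a : Option K) :
    Function.Surjective (spreadFunctional K a) :=
  match a with
  | none => fun y => ⟨(y, 0), rfl⟩
  | some a => fun y => ⟨(0, y), by simp [spreadFunctional]⟩

theorem exists_spreadFunctional_eq_zero (w : K × K) : ∃ a, spreadFunctional K a w = 0 := by
  by_cases hw : w.1 = 0
  · exact ⟨none, hw⟩
  · exact ⟨some (w.2 / w.1), by simp [spreadFunctional, div_mul_cancel₀ _ hw]⟩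

end Spread

theorem LinearMap.exists_surjective_of_not_finiteDimensional {F V W : Type*} [DivisionRing F]
    [AddCommGroup V] [Module F V] [AddCommGroup W] [Module F W] [FiniteDimensional F W]
    (hV : ¬ FiniteDimensional F V) : ∃ π : V →ₗ[F] W, Function.Surjective π := by
  have hrank : (Module.finrank F W : Cardinal) ≤ Module.rank F V :=
    Cardinal.natCast_lt_aleph0.le.trans (not_lt.mp (mt Module.rank_lt_aleph0_iff.mp hV))
  obtain ⟨v, hv⟩ := exists_linearIndependent_of_le_rank hrank
  let ι : W →ₗ[F] V :=
    Fintype.linearCombination F v ∘ₗ (Module.finBasis F W).equivFun.toLinearMap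
  have hι : Function.Injective ι :=
    hv.fintypeLinearCombination_injective.comp (LinearEquiv.injective _)
  obtain ⟨π, hπ⟩ := ι.exists_leftInverse_of_injective (LinearMap.ker_eq_bot.mpr hι)
  exact ⟨π, fun w => ⟨ι w, LinearMap.congr_fun hπ w⟩⟩

theorem exists_iUnion_eq_univ_finrank_quotient_eq {F V : Type*} [Field F] [Fintype F]
    [AddCommGroup V] [Module F V] (hV : ¬ FiniteDimensional F V) {k : ℕ} (hk : k ≠ 0) :
    ∃ f : Fin (Fintype.card F ^ k + 1) → Submodule F V,
      (∀ i, Module.finrank F (V ⧸ f i) = k) ∧ ⋃ i, (f i : Set V) = Set.univ := by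
  obtain ⟨p, _⟩ := CharP.exists F
  have : Fact p.Prime := ⟨CharP.char_is_prime F p⟩
  have : NeZero k := ⟨hk⟩
  let K := FiniteField.Extension F p k
  have : Fintype K := Fintype.ofFinite K
  have hcard : Fintype.card (Option K) = Fintype.card F ^ k + 1 := by
    rw [Fintype.card_option, Fintype.card_eq_nat_card, FiniteField.natCard_extension,
      Nat.card_eq_fintype_card]
  obtain ⟨π, hπ⟩ := LinearMap.exists_surjective_of_not_finiteDimensional (W := K × K) hV
  let e := (Fintype.equivFinOfCardEq hcard).symm
  let φ i : V →ₗ[F] K := (spreadFunctional K (e i)).restrictScalars F ∘ₗ π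
  have hφ i : Function.Surjective (φ i) := (spreadFunctional_surjective _).comp hπ
  refine ⟨fun i => LinearMap.ker (φ i), fun i => ?_, ?_⟩
  · rw [(LinearMap.quotKerEquivOfSurjective _ (hφ i)).finrank_eq, FiniteField.finrank_extension]
  · refine Set.eq_univ_of_forall fun v => Set.mem_iUnion.mpr ?_
    obtain ⟨a, ha⟩ := exists_spreadFunctional_eq_zero (π v)
    exact ⟨e.symm a, by simpa [φ] using ha⟩

theorem AddSubgroup.iUnion_ne_univ_of_card_le_index {G ι : Type*} [AddGroup G] [Fintype ι]
    {c : ℕ} (hc : 2 ≤ c) (hι : Fintype.card ι ≤ c) (H : ι → AddSubgroup G)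
    (hH : ∀ i, (H i).FiniteIndex → c ≤ (H i).index) : ⋃ i, (H i : Set G) ≠ Set.univ := by
  classical
  intro hcover
  have hcosets : ⋃ i ∈ Finset.univ, (0 : G) +ᵥ (H i : Set G) = Set.univ := by
    simpa only [Finset.mem_univ, Set.iUnion_true, zero_vadd] using hcover
  have hc0 : (0 : ℚ) < c := by exact_mod_cast (by omega : 0 < c)
  have hinv : ∀ i, ((H i).index : ℚ)⁻¹ ≤ (c : ℚ)⁻¹ := fun i => by
    by_cases hi : (H i).index = 0
    · simp [hi]
    · exact inv_anti₀ hc0 (by exact_mod_cast hH i ⟨hi⟩)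
  have hsum : ∑ i, ((H i).index : ℚ)⁻¹ = 1 := by
    refine le_antisymm ?_ (AddSubgroup.one_le_sum_inv_index_of_leftCoset_cover hcosets)
    calc ∑ i, ((H i).index : ℚ)⁻¹ ≤ Fintype.card ι • (c : ℚ)⁻¹ :=
          Finset.sum_le_card_nsmul _ _ _ fun i _ => hinv i
      _ ≤ 1 := by
          rw [nsmul_eq_mul, ← div_eq_mul_inv, div_le_one hc0]
          exact_mod_cast hι
  set s := Finset.univ.filter fun i => (H i).FiniteIndex
  have hsum_s : ∑ i ∈ s, ((H i).index : ℚ)⁻¹ = 1 :=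
    (Finset.sum_filter_of_ne fun i _ hi => ⟨by simpa using hi⟩).trans hsum
  have hs : 1 < s.card := by
    have : (1 : ℚ) ≤ s.card * (c : ℚ)⁻¹ := by
      rw [← nsmul_eq_mul, ← hsum_s]
      exact Finset.sum_le_card_nsmul _ _ _ fun i _ => hinv i
    rw [← div_eq_mul_inv, one_le_div hc0] at this
    exact_mod_cast (by exact_mod_cast hc : (2 : ℚ) ≤ c).trans this
  obtain ⟨i, hi, j, hj, hij⟩ := Finset.one_lt_card.mp hs
  have hdisj :=
    AddSubgroup.pairwiseDisjoint_leftCoset_cover_of_sum_neg_index_eq_zero hcosets hsum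
  have hzero : ∀ l, (0 : G) ∈ (0 : G) +ᵥ (H l : Set G) :=
    fun l => ⟨0, (H l).zero_mem, zero_vadd G 0⟩
  exact Set.disjoint_left.mp (hdisj hi hj hij) (hzero i) (hzero j)

theorem Submodule.pow_le_index_of_le_rank_quotient {F V : Type*} [Field F] [Fintype F]
    [AddCommGroup V] [Module F V] {p : Submodule F V} {k : ℕ}
    (hk : (k : Cardinal) ≤ Module.rank F (V ⧸ p)) [p.toAddSubgroup.FiniteIndex] :
    Fintype.card F ^ k ≤ p.toAddSubgroup.index := by
  have : Finite (V ⧸ p) := AddSubgroup.finite_quotient_of_finiteIndex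
  have : Module.Finite F (V ⧸ p) := Module.Finite.of_finite
  have hfin : k ≤ Module.finrank F (V ⧸ p) := by
    rwa [← Module.finrank_eq_rank, Nat.cast_le] at hk
  rw [AddSubgroup.index_eq_card, ← Nat.card_eq_fintype_card]
  exact (Nat.pow_le_pow_right Nat.card_pos hfin).trans_eq Module.natCard_eq_pow_finrank.symm

theorem stmt_19 (F V : Type*) [Field F] [Fintype F] (q : ℕ) (hq : Fintype.card F = q)
    [AddCommGroup V] [Module F V] (hV : ¬ FiniteDimensional F V) (k : ℕ) (hk : 1 ≤ k) :
    (∃ f : Fin (q ^ k + 1) → Submodule F V,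
        (∀ i, Module.finrank F (V ⧸ f i) = k) ∧ (⋃ i, (f i : Set V)) = Set.univ) ∧
    (∀ (m : ℕ), m ≤ q ^ k → ∀ f : Fin m → Submodule F V,
        (∀ i, (k : Cardinal) ≤ Module.rank F (V ⧸ f i)) →
        (⋃ i, (f i : Set V)) ≠ Set.univ) := by
  subst hq
  refine ⟨exists_iUnion_eq_univ_finrank_quotient_eq hV (by omega), fun m hm f hf => ?_⟩
  have hq : 2 ≤ Fintype.card F ^ k :=
    Fintype.one_lt_card.trans_le (Nat.le_self_pow (by omega) _)
  exact AddSubgroup.iUnion_ne_univ_of_card_le_index hq (by simpa using hm)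
    (fun i => (f i).toAddSubgroup) fun i _ => Submodule.pow_le_index_of_le_rank_quotient (hf i)
end
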